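/- arXiv:math/0101160 — 7 statements merged into one kernel-verified Lean document; each statement's English description precedes it below -/
import Mathlib

section
/- Let R̂ be the 4×4 matrix with rows (1, h, -h, h₃), (0, 0, 1, h), (0, 1, 0, -h), (0, 0, 0, 1) over a field of characteristic 0. Then (R̂ - I)²(R̂ + I) = 0. Moreover, if h₃ ≠ -h², then (R̂ - I)(R̂ + I) ≠ 0, so the cubic is the minimal polynomial relation of this form. -/
/-!
Write `c = 2 (h₃ + h²)`. A direct computation gives `R̂² = 1 + c E₀₃`, with `E₀₃` the matrix unit,
so `(R̂ - 1)(R̂ + 1) = R̂² - 1 = c E₀₃`, which is nonzero exactly when `h₃ ≠ -h²` (as `2 ≠ 0`).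
Multiplying once more by `R̂ - 1` kills it, because the first column of `R̂ - 1` vanishes.
-/

open Matrix

theorem Matrix.mul_single_eq_zero_of_col_eq_zero {l m n α : Type*} [Fintype m] [DecidableEq m]
    [DecidableEq n] [NonUnitalNonAssocSemiring α] {M : Matrix l m α} {i : m}
    (hM : ∀ a, M a i = 0) (j : n) (c : α) : M * single i j c = 0 := by
  ext a b
  by_cases hb : b = j
  · subst hb
    simp [hM]
  · exact mul_single_apply_of_ne c i j a b hb M

section ExoticRHat

variable {R : Type*} [CommRing R]

/-- The braided form `P R₁` of the R-matrix of the first exotic bialgebra. -/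
def exoticRHat (h h₃ : R) : Matrix (Fin 4) (Fin 4) R :=
  !![1, h, -h, h₃; 0, 0, 1, h; 0, 1, 0, -h; 0, 0, 0, 1]

theorem exoticRHat_sq (h h₃ : R) :
    exoticRHat h h₃ ^ 2 = 1 + single 0 3 (2 * (h₃ + h ^ 2)) := by
  ext i j
  fin_cases i <;> fin_cases j <;>
    simp [exoticRHat, sq, mul_apply, Fin.sum_univ_four, one_apply]; ring

theorem exoticRHat_sub_one_mul_add_one (h h₃ : R) :
    (exoticRHat h h₃ - 1) * (exoticRHat h h₃ + 1) = single 0 3 (2 * (h₃ + h ^ 2)) := by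
  have hcomm : (exoticRHat h h₃ - 1) * (exoticRHat h h₃ + 1) = exoticRHat h h₃ ^ 2 - 1 := by
    noncomm_ring
  rw [hcomm, exoticRHat_sq, add_sub_cancel_left]

theorem exoticRHat_sub_one_apply_zero (h h₃ : R) (a : Fin 4) :
    (exoticRHat h h₃ - 1) a 0 = 0 := by
  fin_cases a <;> simp [exoticRHat]

end ExoticRHat

theorem stmt1 (K : Type*) [Field K] [CharZero K] (h h₃ : K)
    (Rhat : Matrix (Fin 4) (Fin 4) K)
    (hR : Rhat = !![1, h, -h, h₃; 0, 0, 1, h; 0, 1, 0, -h; 0, 0, 0, 1]) :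
    (Rhat - 1) ^ 2 * (Rhat + 1) = 0 ∧
      (h₃ ≠ -h ^ 2 → (Rhat - 1) * (Rhat + 1) ≠ 0) := by
  change Rhat = exoticRHat h h₃ at hR
  subst hR
  refine ⟨?_, fun hne hzero => hne ?_⟩
  · rw [sq, mul_assoc, exoticRHat_sub_one_mul_add_one]
    exact mul_single_eq_zero_of_col_eq_zero (exoticRHat_sub_one_apply_zero h h₃) _ _
  · have hc := congrFun (congrFun hzero 0) 3
    rw [exoticRHat_sub_one_mul_add_one, single_apply_same, Matrix.zero_apply] at hc
    linear_combination hc / 2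
end

section
/- The matrices R₁ = ((1,-h,h,h₃),(0,1,0,h),(0,0,1,-h),(0,0,0,1)) (as rows) satisfy the quantum Yang–Baxter equation R₁₂R₁₃R₂₃ = R₂₃R₁₃R₁₂ on the triple tensor product, for all values of h and h₃. -/
/-! With `E = single 0 1 1`, the matrix is `R = 1 + h (E ⊗ 1 - 1 ⊗ E) + h₃ (E ⊗ E)`. Placing it on
factors `i, j` of the triple tensor product gives `1 + h (Eᵢ - Eⱼ) + h₃ Eᵢ Eⱼ`, where `Eᵢ` is `E`
acting on factor `i`. The three `Eᵢ` commute, hence so do `R₁₂`, `R₁₃`, `R₂₃`, and then both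
sides of the Yang–Baxter equation are the same product. -/

/-- Row-major identification of `Fin 2 × Fin 2` with `Fin 4`,
    `(i,j) ↦ 2*i + j`, matching the enumeration (1,1),(1,2),(2,1),(2,2). -/
def pairIdx : Fin 2 × Fin 2 → Fin 4 := fun p => ⟨2 * p.1.1 + p.2.1, by omega⟩

open Matrix
open scoped Kronecker

section TwoParamR

variable {K A : Type*} [CommRing K] [Ring A] [Algebra K A]

def twoParamR (h h₃ : K) (x y : A) : A := 1 + h • (x - y) + h₃ • (x * y)

theorem map_twoParamR {B F : Type*} [Ring B] [Algebra K B] [FunLike F A B] [AlgHomClass F K A B]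
    (φ : F) (h h₃ : K) (x y : A) :
    φ (twoParamR h h₃ x y) = twoParamR h h₃ (φ x) (φ y) := by
  simp [twoParamR]

theorem Commute.twoParamR_right {a x y : A} (hx : Commute a x) (hy : Commute a y) (h h₃ : K) :
    Commute a (twoParamR h h₃ x y) :=
  ((Commute.one_right a).add_right ((hx.sub_right hy).smul_right h)).add_right
    ((hx.mul_right hy).smul_right h₃)

theorem Commute.twoParamR {x y x' y' : A} (hxx' : Commute x x') (hxy' : Commute x y')
    (hyx' : Commute y x') (hyy' : Commute y y') (h h₃ : K) :
    Commute (twoParamR h h₃ x y) (twoParamR h h₃ x' y') :=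
  Commute.twoParamR_right ((Commute.twoParamR_right hxx'.symm hyx'.symm h h₃).symm)
    ((Commute.twoParamR_right hxy'.symm hyy'.symm h h₃).symm) h h₃

theorem twoParamR_yangBaxter {x y z : A} (hxy : Commute x y) (hxz : Commute x z)
    (hyz : Commute y z) (h h₃ : K) :
    twoParamR h h₃ x y * twoParamR h h₃ x z * twoParamR h h₃ y z =
      twoParamR h h₃ y z * twoParamR h h₃ x z * twoParamR h h₃ x y := by
  have h12_13 := Commute.twoParamR (Commute.refl x) hxz hxy.symm hyz h h₃
  have h12_23 := Commute.twoParamR hxy hxz (Commute.refl y) hyz h h₃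
  have h13_23 := Commute.twoParamR hxy hxz hyz.symm (Commute.refl z) h h₃
  rw [h12_13.eq, mul_assoc, h12_23.eq, ← mul_assoc, h13_23.eq]

end TwoParamR

section Kronecker

variable {K : Type*} [CommRing K] {m n : Type*} [Fintype m] [DecidableEq m] [Fintype n]
  [DecidableEq n]

def kroneckerOneAlgHom : Matrix m m K →ₐ[K] Matrix (m × n) (m × n) K where
  toFun M := M ⊗ₖ 1
  map_one' := one_kronecker_one
  map_mul' M N := by rw [← mul_kronecker_mul, mul_one]
  map_zero' := zero_kronecker _
  map_add' M N := add_kronecker M N 1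
  commutes' c := by
    simp only [Algebra.algebraMap_eq_smul_one, smul_kronecker, one_kronecker_one]

theorem commute_kronecker_one_one_kronecker (A : Matrix m m K) (B : Matrix n n K) :
    Commute (A ⊗ₖ (1 : Matrix n n K)) ((1 : Matrix m m K) ⊗ₖ B) := by
  simp only [Commute, SemiconjBy, ← mul_kronecker_mul, mul_one, one_mul]

omit [DecidableEq n] in
theorem Commute.one_kronecker {A B : Matrix n n K} (hAB : Commute A B) :
    Commute ((1 : Matrix m m K) ⊗ₖ A) ((1 : Matrix m m K) ⊗ₖ B) := by
  simp only [Commute, SemiconjBy, ← mul_kronecker_mul, mul_one, hAB.eq]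

/-- The two-site operator acting on the two tensor factors that `σ` sends to the first component
of `(n × n) × n`, and as the identity on the remaining one. -/
def embedTwoSite (σ : n × n × n ≃ (n × n) × n) :
    Matrix (n × n) (n × n) K →ₐ[K] Matrix (n × n × n) (n × n × n) K :=
  (reindexAlgEquiv K K σ.symm).toAlgHom.comp kroneckerOneAlgHom

variable (n) in
def sites12 : n × n × n ≃ (n × n) × n := (Equiv.prodAssoc n n n).symm

variable (n) in
def sites13 : n × n × n ≃ (n × n) × n :=
  ((Equiv.refl n).prodCongr (Equiv.prodComm n n)).trans (Equiv.prodAssoc n n n).symm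

variable (n) in
def sites23 : n × n × n ≃ (n × n) × n := Equiv.prodComm n (n × n)

theorem embedTwoSite_sites12_kronecker (A B : Matrix n n K) :
    embedTwoSite (sites12 n) (A ⊗ₖ B) = A ⊗ₖ (B ⊗ₖ (1 : Matrix n n K)) := by
  ext ⟨a, b, c⟩ ⟨d, e, f⟩
  exact mul_assoc _ _ _

theorem embedTwoSite_sites13_kronecker (A B : Matrix n n K) :
    embedTwoSite (sites13 n) (A ⊗ₖ B) = A ⊗ₖ ((1 : Matrix n n K) ⊗ₖ B) := by
  ext ⟨a, b, c⟩ ⟨d, e, f⟩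
  exact mul_right_comm _ _ _ |>.trans (mul_assoc _ _ _)

theorem embedTwoSite_sites23_kronecker (A B : Matrix n n K) :
    embedTwoSite (sites23 n) (A ⊗ₖ B) = (1 : Matrix n n K) ⊗ₖ (A ⊗ₖ B) := by
  ext ⟨a, b, c⟩ ⟨d, e, f⟩
  exact mul_comm _ _

end Kronecker

section YangBaxter

variable {K : Type*} [CommRing K] {n : Type*} [Fintype n] [DecidableEq n]

def kroneckerTwoParamR (h h₃ : K) (E : Matrix n n K) : Matrix (n × n) (n × n) K :=
  twoParamR h h₃ (E ⊗ₖ (1 : Matrix n n K)) ((1 : Matrix n n K) ⊗ₖ E)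

theorem yangBaxter_kroneckerTwoParamR (h h₃ : K) (E : Matrix n n K) :
    let R := kroneckerTwoParamR h h₃ E
    embedTwoSite (sites12 n) R * embedTwoSite (sites13 n) R * embedTwoSite (sites23 n) R =
      embedTwoSite (sites23 n) R * embedTwoSite (sites13 n) R * embedTwoSite (sites12 n) R := by
  simp only [kroneckerTwoParamR, map_twoParamR, embedTwoSite_sites12_kronecker,
    embedTwoSite_sites13_kronecker, embedTwoSite_sites23_kronecker, one_kronecker_one]
  exact twoParamR_yangBaxter (commute_kronecker_one_one_kronecker _ _)
    (commute_kronecker_one_one_kronecker _ _)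
    (commute_kronecker_one_one_kronecker _ _).one_kronecker h h₃

end YangBaxter

theorem pairIdx_eq_kroneckerTwoParamR {K : Type*} [CommRing K] (h h₃ : K) :
    (fun p q => !![1, -h, h, h₃; 0, 1, 0, h; 0, 0, 1, -h; 0, 0, 0, 1] (pairIdx p) (pairIdx q)) =
      kroneckerTwoParamR h h₃ (single 0 1 1 : Matrix (Fin 2) (Fin 2) K) := by
  rw [kroneckerTwoParamR, twoParamR, ← mul_kronecker_mul, mul_one, one_mul]
  ext ⟨a, b⟩ ⟨c, d⟩
  fin_cases a <;> fin_cases b <;> fin_cases c <;> fin_cases d <;>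
    simp [pairIdx, one_apply]

theorem stmt6 (K : Type*) [Field K] (h h₃ : K) :
    let R : Matrix (Fin 4) (Fin 4) K :=
      !![1, -h, h, h₃; 0, 1, 0, h; 0, 0, 1, -h; 0, 0, 0, 1]
    let R' : Matrix (Fin 2 × Fin 2) (Fin 2 × Fin 2) K :=
      fun p q => R (pairIdx p) (pairIdx q)
    let R12 : Matrix (Fin 2 × Fin 2 × Fin 2) (Fin 2 × Fin 2 × Fin 2) K :=
      fun p q => R' (p.1, p.2.1) (q.1, q.2.1) * (if p.2.2 = q.2.2 then 1 else 0)
    let R13 : Matrix (Fin 2 × Fin 2 × Fin 2) (Fin 2 × Fin 2 × Fin 2) K :=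
      fun p q => R' (p.1, p.2.2) (q.1, q.2.2) * (if p.2.1 = q.2.1 then 1 else 0)
    let R23 : Matrix (Fin 2 × Fin 2 × Fin 2) (Fin 2 × Fin 2 × Fin 2) K :=
      fun p q => R' (p.2.1, p.2.2) (q.2.1, q.2.2) * (if p.1 = q.1 then 1 else 0)
    R12 * R13 * R23 = R23 * R13 * R12 := by
  intro R R' R12 R13 R23
  have h12 : R12 = embedTwoSite (sites12 _) R' := rfl
  have h13 : R13 = embedTwoSite (sites13 _) R' := rfl
  have h23 : R23 = embedTwoSite (sites23 _) R' := rfl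
  rw [h12, h13, h23, show R' = _ from pairIdx_eq_kroneckerTwoParamR h h₃]
  exact yangBaxter_kroneckerTwoParamR h h₃ _
end

section
/- The matrix R₂ with rows (1, h₁, h₂, h₃), (0, 1, 0, h₂), (0, 0, 1, h₁), (0, 0, 0, 1) satisfies the quantum Yang–Baxter equation R₁₂R₁₃R₂₃ = R₂₃R₁₃R₁₂ for all parameters h₁, h₂, h₃. -/
open Matrix Submodule
open scoped Kronecker

theorem Commute.mul_mul_eq_mul_mul_rev {M : Type*} [Semigroup M] {a b c : M}
    (hab : Commute a b) (hac : Commute a c) (hbc : Commute b c) : a * b * c = c * b * a := by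
  rw [hab.eq, mul_assoc, hac.eq, ← mul_assoc, hbc.eq]

theorem commute_of_mem_span {K A : Type*} [CommSemiring K] [Semiring A] [Algebra K A] {s : Set A}
    (hs : ∀ a ∈ s, ∀ b ∈ s, Commute a b) {x y : A} (hx : x ∈ span K s) (hy : y ∈ span K s) :
    Commute x y :=
  Algebra.commute_of_mem_adjoin_of_forall_mem_commute (Algebra.span_le_adjoin K s hy) fun b hb =>
    (Algebra.commute_of_mem_adjoin_of_forall_mem_commute (Algebra.span_le_adjoin K s hx)
      fun a ha => hs b hb a ha).symm

theorem Commute.kronecker {m p K : Type*} [Fintype m] [Fintype p] [CommSemiring K]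
    {A A' : Matrix m m K} {B B' : Matrix p p K} (hA : Commute A A') (hB : Commute B B') :
    Commute (A ⊗ₖ B) (A' ⊗ₖ B') := by
  rw [Commute, SemiconjBy, ← mul_kronecker_mul, ← mul_kronecker_mul, hA.eq, hB.eq]

section ThreeFold

variable {n K : Type*} [DecidableEq n] [CommSemiring K]

def actOn12 : Matrix (n × n) (n × n) K →ₗ[K] Matrix (n × n × n) (n × n × n) K where
  toFun X p q := X (p.1, p.2.1) (q.1, q.2.1) * if p.2.2 = q.2.2 then 1 else 0
  map_add' X Y := by ext; exact add_mul ..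
  map_smul' c X := by ext; exact mul_assoc ..

def actOn13 : Matrix (n × n) (n × n) K →ₗ[K] Matrix (n × n × n) (n × n × n) K where
  toFun X p q := X (p.1, p.2.2) (q.1, q.2.2) * if p.2.1 = q.2.1 then 1 else 0
  map_add' X Y := by ext; exact add_mul ..
  map_smul' c X := by ext; exact mul_assoc ..

def actOn23 : Matrix (n × n) (n × n) K →ₗ[K] Matrix (n × n × n) (n × n × n) K where
  toFun X p q := X (p.2.1, p.2.2) (q.2.1, q.2.2) * if p.1 = q.1 then 1 else 0
  map_add' X Y := by ext; exact add_mul ..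
  map_smul' c X := by ext; exact mul_assoc ..

theorem actOn12_kronecker (A B : Matrix n n K) : actOn12 (A ⊗ₖ B) = A ⊗ₖ (B ⊗ₖ 1) := by
  ext ⟨i, j, k⟩ ⟨i', j', k'⟩
  exact mul_assoc ..

theorem actOn13_kronecker (A B : Matrix n n K) : actOn13 (A ⊗ₖ B) = A ⊗ₖ (1 ⊗ₖ B) := by
  ext ⟨i, j, k⟩ ⟨i', j', k'⟩
  exact (mul_assoc ..).trans (congrArg _ (mul_comm ..))

theorem actOn23_kronecker (A B : Matrix n n K) : actOn23 (A ⊗ₖ B) = 1 ⊗ₖ (A ⊗ₖ B) := by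
  ext ⟨i, j, k⟩ ⟨i', j', k'⟩
  exact mul_comm ..

theorem yangBaxter_of_mem_span_kronecker [Fintype n] {𝒜 : Subalgebra K (Matrix n n K)}
    (h𝒜 : ∀ a ∈ 𝒜, ∀ b ∈ 𝒜, Commute a b) {X : Matrix (n × n) (n × n) K}
    (hX : X ∈ span K (Set.image2 (· ⊗ₖ ·) 𝒜 𝒜)) :
    actOn12 X * actOn13 X * actOn23 X = actOn23 X * actOn13 X * actOn12 X := by
  set T : Set (Matrix (n × n × n) (n × n × n) K) :=
    Set.image2 (· ⊗ₖ ·) 𝒜 (Set.image2 (· ⊗ₖ ·) 𝒜 𝒜)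
  have hT : ∀ a ∈ T, ∀ b ∈ T, Commute a b := by
    rintro _ ⟨A, hA, _, ⟨B, hB, C, hC, rfl⟩, rfl⟩ _ ⟨A', hA', _, ⟨B', hB', C', hC', rfl⟩, rfl⟩
    exact (h𝒜 A hA A' hA').kronecker ((h𝒜 B hB B' hB').kronecker (h𝒜 C hC C' hC'))
  have hmem (f : Matrix (n × n) (n × n) K →ₗ[K] Matrix (n × n × n) (n × n × n) K)
      (hf : ∀ A ∈ 𝒜, ∀ B ∈ 𝒜, f (A ⊗ₖ B) ∈ T) : f X ∈ span K T := by
    refine span_mono ?_ (apply_mem_span_image_of_mem_span f hX)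
    rintro _ ⟨_, ⟨A, hA, B, hB, rfl⟩, rfl⟩
    exact hf A hA B hB
  have h12 : actOn12 X ∈ span K T := hmem _ fun A hA B hB => by
    rw [actOn12_kronecker]; exact Set.mem_image2_of_mem hA (Set.mem_image2_of_mem hB 𝒜.one_mem)
  have h13 : actOn13 X ∈ span K T := hmem _ fun A hA B hB => by
    rw [actOn13_kronecker]; exact Set.mem_image2_of_mem hA (Set.mem_image2_of_mem 𝒜.one_mem hB)
  have h23 : actOn23 X ∈ span K T := hmem _ fun A hA B hB => by
    rw [actOn23_kronecker]; exact Set.mem_image2_of_mem 𝒜.one_mem (Set.mem_image2_of_mem hA hB)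
  exact Commute.mul_mul_eq_mul_mul_rev (commute_of_mem_span hT h12 h13)
    (commute_of_mem_span hT h12 h23) (commute_of_mem_span hT h13 h23)

end ThreeFold

theorem hietarinta_eq_kronecker {K : Type*} [CommSemiring K] (h₁ h₂ h₃ : K) :
    (!![1, h₁, h₂, h₃; 0, 1, 0, h₂; 0, 0, 1, h₁; 0, 0, 0, 1] : Matrix (Fin 4) (Fin 4) K).submatrix
      pairIdx pairIdx =
    1 ⊗ₖ 1 + h₂ • (single 0 1 1 ⊗ₖ 1) + h₁ • (1 ⊗ₖ single 0 1 1) +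
      h₃ • (single 0 1 1 ⊗ₖ single 0 1 1) := by
  ext ⟨a, b⟩ ⟨c, d⟩
  simp only [submatrix_apply, Matrix.add_apply, Matrix.smul_apply, kronecker_apply, single_apply,
    one_apply]
  fin_cases a <;> fin_cases b <;> fin_cases c <;> fin_cases d <;> simp [pairIdx]

theorem stmt7 (K : Type*) [Field K] (h₁ h₂ h₃ : K) :
    let R : Matrix (Fin 4) (Fin 4) K :=
      !![1, h₁, h₂, h₃; 0, 1, 0, h₂; 0, 0, 1, h₁; 0, 0, 0, 1]
    let R' : Matrix (Fin 2 × Fin 2) (Fin 2 × Fin 2) K :=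
      fun p q => R (pairIdx p) (pairIdx q)
    let R12 : Matrix (Fin 2 × Fin 2 × Fin 2) (Fin 2 × Fin 2 × Fin 2) K :=
      fun p q => R' (p.1, p.2.1) (q.1, q.2.1) * (if p.2.2 = q.2.2 then 1 else 0)
    let R13 : Matrix (Fin 2 × Fin 2 × Fin 2) (Fin 2 × Fin 2 × Fin 2) K :=
      fun p q => R' (p.1, p.2.2) (q.1, q.2.2) * (if p.2.1 = q.2.1 then 1 else 0)
    let R23 : Matrix (Fin 2 × Fin 2 × Fin 2) (Fin 2 × Fin 2 × Fin 2) K :=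
      fun p q => R' (p.2.1, p.2.2) (q.2.1, q.2.2) * (if p.1 = q.1 then 1 else 0)
    R12 * R13 * R23 = R23 * R13 * R12 := by
  intro R R' R12 R13 R23
  set E : Matrix (Fin 2) (Fin 2) K := single 0 1 1
  have hcomm : ∀ a ∈ Algebra.adjoin K {E}, ∀ b ∈ Algebra.adjoin K {E}, Commute a b :=
    fun a ha b hb => Algebra.commute_of_mem_adjoin_singleton_of_commute hb
      (Algebra.commute_of_mem_adjoin_self ha).symm
  have hR' : R' ∈ span K (Set.image2 (· ⊗ₖ ·) (Algebra.adjoin K {E}) (Algebra.adjoin K {E})) := by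
    have hE := Algebra.self_mem_adjoin_singleton K E
    have h1 := (Algebra.adjoin K {E}).one_mem
    rw [show R' = R.submatrix pairIdx pairIdx from rfl, hietarinta_eq_kronecker]
    refine add_mem (add_mem (add_mem ?_ (smul_mem _ _ ?_)) (smul_mem _ _ ?_)) (smul_mem _ _ ?_) <;>
      exact subset_span (Set.mem_image2_of_mem ‹_› ‹_›)
  exact yangBaxter_of_mem_span_kronecker hcomm hR'
end

section
/- In the unital associative algebra A₂ generated by a, b, c, d with relations c² = 0, ca = ac = 0, dc = cd = 0, da = ad, cb = bc, a² = d² = ad + bc, ab = bd = ba + (h₁-h₂)bc, db = bd + (h₂-h₁)bc, the elements ã = (a+d)/2 and d̃ = (a-d)/2 satisfy: ãd̃ = d̃ã = 0, ãc = cã = d̃c = cd̃ = 0, ãb = bã, bc = cb = 2d̃², d̃³ = 0, and d̃b = -bd̃ = (h₁-h₂)d̃². -/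
/-!
Everything follows from the unscaled elements `s = a + d` and `t = a - d`. Since `a` and `d`
commute and have equal squares, `s t = t s = a² - d² = 0`, while `t² = 2(d² - a d) = 2 b c`;
`c` kills `a` and `d` on both sides, hence `s` and `t`. The three relations involving `b` give
`s b = b s` and `t b = -(b t) = (h₁ - h₂) b c`. Finally `t³ = 2 b (c t) = 0`, and dividing by
powers of two yields the stated identities for `ã = s / 2` and `d̃ = t / 2`.
-/

namespace A2

section Ring

variable {R : Type*} [Ring R] {a d e : R}

theorem add_mul_sub_eq_zero (hc : Commute a d) (hsq : a * a = d * d) :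
    (a + d) * (a - d) = 0 := by
  rw [← hc.mul_self_sub_mul_self_eq, hsq, sub_self]

theorem sub_mul_add_eq_zero (hc : Commute a d) (hsq : a * a = d * d) :
    (a - d) * (a + d) = 0 := by
  rw [← hc.mul_self_sub_mul_self_eq', hsq, sub_self]

theorem sub_mul_self_eq (hc : Commute a d) (hsq : a * a = d * d) (he : d * d = a * d + e) :
    (a - d) * (a - d) = 2 * e := by
  have : (a - d) * (a - d) = 2 * (d * d - a * d) := by
    rw [sub_mul, mul_sub, mul_sub, hsq, ← hc.eq]; noncomm_ring
  rw [this, he, add_sub_cancel_left]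

end Ring

section Algebra

variable {K A : Type*} [CommRing K] [Ring A] [Algebra K A] {h₁ h₂ : K} {a b d e : A}

theorem add_mul_eq_mul_add (hab : a * b = b * d) (hbd : b * d = b * a + (h₁ - h₂) • e)
    (hdb : d * b = b * d + (h₂ - h₁) • e) : (a + d) * b = b * (a + d) := by
  rw [add_mul, mul_add, hab, hdb, hbd]; module

theorem sub_mul_eq_smul (hab : a * b = b * d) (hbd : b * d = b * a + (h₁ - h₂) • e)
    (hdb : d * b = b * d + (h₂ - h₁) • e) : (a - d) * b = (h₁ - h₂) • e := by
  rw [sub_mul, hab, hdb, hbd]; module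

theorem mul_sub_eq_neg_smul (hbd : b * d = b * a + (h₁ - h₂) • e) :
    b * (a - d) = -((h₁ - h₂) • e) := by
  rw [mul_sub, hbd]; module

end Algebra

end A2

open A2

theorem stmt10_general (K : Type*) [Field K] (hK : (2 : K) ≠ 0)
    (A : Type*) [Ring A] [Algebra K A] (h₁ h₂ : K) (a b c d : A)
    (r2 : c * a = 0) (r3 : a * c = 0)
    (r4 : d * c = 0) (r5 : c * d = 0) (r6 : d * a = a * d)
    (r7 : c * b = b * c) (r8 : a * a = d * d)
    (r9 : d * d = a * d + b * c)
    (r10 : a * b = b * d)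
    (r11 : b * d = b * a + (h₁ - h₂) • (b * c))
    (r12 : d * b = b * d + (h₂ - h₁) • (b * c)) :
    let ta : A := (2 : K)⁻¹ • (a + d)
    let td : A := (2 : K)⁻¹ • (a - d)
    ta * td = 0 ∧ td * ta = 0 ∧
      ta * c = 0 ∧ c * ta = 0 ∧ td * c = 0 ∧ c * td = 0 ∧
      ta * b = b * ta ∧
      b * c = c * b ∧ b * c = (2 : K) • (td * td) ∧
      td * td * td = 0 ∧
      td * b = -(b * td) ∧ td * b = (h₁ - h₂) • (td * td) := by
  intro ta td
  have had : Commute a d := r6.symm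
  have hsc : (a + d) * c = 0 := by rw [add_mul, r3, r4, add_zero]
  have hcs : c * (a + d) = 0 := by rw [mul_add, r2, r5, add_zero]
  have htc : (a - d) * c = 0 := by rw [sub_mul, r3, r4, sub_zero]
  have hct : c * (a - d) = 0 := by rw [mul_sub, r2, r5, sub_zero]
  have htt : (a - d) * (a - d) = (2 : K) • (b * c) := by
    rw [sub_mul_self_eq had r8 r9, two_mul, two_smul]
  have hbct : b * c * (a - d) = 0 := by rw [mul_assoc, hct, mul_zero]
  simp only [ta, td, smul_mul_assoc, mul_smul_comm, add_mul_sub_eq_zero had r8,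
    sub_mul_add_eq_zero had r8, hsc, hcs, htc, hct, add_mul_eq_mul_add r10 r11 r12,
    sub_mul_eq_smul r10 r11 r12, mul_sub_eq_neg_smul r11, htt, hbct, r7, smul_zero,
    smul_smul, true_and]
  refine ⟨?_, ?_, ?_⟩ <;> match_scalars <;> field_simp

theorem stmt10 (K : Type*) [Field K] (hK : (2 : K) ≠ 0)
    (A : Type*) [Ring A] [Algebra K A] (h₁ h₂ : K) (a b c d : A)
    (r1 : c * c = 0) (r2 : c * a = 0) (r3 : a * c = 0)
    (r4 : d * c = 0) (r5 : c * d = 0) (r6 : d * a = a * d)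
    (r7 : c * b = b * c) (r8 : a * a = d * d)
    (r9 : d * d = a * d + b * c)
    (r10 : a * b = b * d)
    (r11 : b * d = b * a + (h₁ - h₂) • (b * c))
    (r12 : d * b = b * d + (h₂ - h₁) • (b * c)) :
    let ta : A := (2 : K)⁻¹ • (a + d)
    let td : A := (2 : K)⁻¹ • (a - d)
    ta * td = 0 ∧ td * ta = 0 ∧
      ta * c = 0 ∧ c * ta = 0 ∧ td * c = 0 ∧ c * td = 0 ∧
      ta * b = b * ta ∧
      b * c = c * b ∧ b * c = (2 : K) • (td * td) ∧
      td * td * td = 0 ∧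
      td * b = -(b * td) ∧ td * b = (h₁ - h₂) • (td * td) :=
  stmt10_general K hK A h₁ h₂ a b c d r2 r3 r4 r5 r6 r7 r8 r9 r10 r11 r12
end

section
/- The bialgebra A₁ admits no antipode: there is no linear map γ : A₁ → A₁ satisfying the antipode axiom m∘(id⊗γ)∘δ = i∘ε. More precisely, if γ were an antipode then applying the axiom to d gives c·γ(b) + d·γ(d) = 1, and multiplying on the left by c yields c = 0, contradicting c ≠ 0 in A₁. -/
theorem eq_zero_of_mul_add_mul_eq_one {R : Type*} [Semiring R] {c d x y : R}
    (hcc : c * c = 0) (hcd : c * d = 0) (h : c * x + d * y = 1) : c = 0 :=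
  calc c = c * (c * x + d * y) := by rw [h, mul_one]
    _ = 0 := by rw [mul_add, ← mul_assoc, ← mul_assoc, hcc, hcd, zero_mul, zero_mul, add_zero]

theorem stmt11_general
    (A : Type*) [Ring A] (b c d : A)
    (h1 : c * c = 0)
    (h5 : c * d = 0)
    (hc : c ≠ 0) :
    ¬ ∃ γ : A → A, c * γ b + d * γ d = 1 := by
  rintro ⟨γ, hγ⟩
  exact hc (eq_zero_of_mul_add_mul_eq_one h1 h5 hγ)

/-- The exotic bialgebra `A₁` has no antipode: in any algebra with elements
`a,b,c,d` satisfying the `A₁` relations and `c ≠ 0`, there is no map `γ` such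
that the antipode axiom applied to `d` holds, i.e. `c·γ(b) + d·γ(d) = 1`. -/
theorem stmt11 (K : Type*) [Field K]
    (A : Type*) [Ring A] [Algebra K A] (h : K) (a b c d : A)
    (h1 : c * c = 0) (h2 : c * a = 0) (h3 : a * c = 0)
    (h4 : d * c = 0) (h5 : c * d = 0) (h6 : d * a = a * d)
    (h7 : c * b = b * c) (h8 : a * a = d * d)
    (h9 : a * b = b * a + h • (a * a + b * c - a * d))
    (h10 : d * b = b * d - h • (a * a + b * c - a * d))
    (hc : c ≠ 0) :
    ¬ ∃ γ : A → A, c * γ b + d * γ d = 1 :=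
  stmt11_general A b c d h1 h5 hc
end

section
/- The bialgebra U₁ admits no antipode: if γ satisfied the antipode axiom, then applying it to E would give E·γ(E) = 1, and left multiplication by any Z ∈ {Ã,B,C,D̃} (which satisfies ZE = 0) would force Z = 0, contradicting that Z ≠ 0 in U₁. -/
theorem stmt15_general (U : Type*) [Ring U] (A E : U)
    (r2 : A * E = 0)
    (hA : A ≠ 0) :
    ¬ ∃ γ : U → U, E * γ E = 1 := by
  rintro ⟨γ, h⟩
  apply hA
  calc A = A * (E * γ E) := by rw [h, mul_one]
    _ = 0 := by rw [← mul_assoc, r2, zero_mul]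

/-- The dual bialgebra `U₁` has no antipode: with generators `A,B,C,D,E`
satisfying `Z·E = E·Z = 0` for `Z ∈ {A,B,C,D}` and the generators nonzero,
there is no map `γ` with `E·γ(E) = 1` (the antipode axiom applied to `E`). -/
theorem stmt15 (U : Type*) [Ring U] (A B C D E : U)
    (r1 : E * A = 0) (r2 : A * E = 0)
    (r3 : E * B = 0) (r4 : B * E = 0)
    (r5 : E * C = 0) (r6 : C * E = 0)
    (r7 : E * D = 0) (r8 : D * E = 0)
    (hA : A ≠ 0) (hB : B ≠ 0) (hC : C ≠ 0) (hD : D ≠ 0) :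
    ¬ ∃ γ : U → U, E * γ E = 1 :=
  stmt15_general U A E r2 hA
end

section
/- Define δ on generators by δ(B) = B⊗1 + F₊F₋⊗B and δ(F±) = F±⊗F±, with ε(B) = 0, ε(F±) = 1. Then these satisfy the counit axioms, and δ is coassociative on B: (δ⊗id)(δ(B)) = (id⊗δ)(δ(B)) = B⊗1⊗1 + F₊F₋⊗B⊗1 + F₊F₋⊗F₊F₋⊗B. -/
/-! `F₊` and `F₋` are grouplike, hence so is `g = F₊F₋`, and `δ B = B ⊗ 1 + g ⊗ B` makes `B`
skew-primitive. For a skew-primitive `b` both iterated coproducts expand to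
`b ⊗ 1 ⊗ 1 + g ⊗ b ⊗ 1 + g ⊗ g ⊗ b`, and the counit axioms reduce to `ε g = 1` and `ε b = 0`. -/

open TensorProduct

noncomputable section

variable (K : Type*) [CommRing K]

/-- Generators: 0 = B, 1 = F₊, 2 = F₋. -/
abbrev U3 := FreeAlgebra K (Fin 3)

noncomputable def Y (i : Fin 3) : U3 K := FreeAlgebra.ι K i

/-- The coproduct: `δ(B) = B⊗1 + F₊F₋⊗B`, `δ(F±) = F±⊗F±`. -/
noncomputable def deltaU3 : U3 K →ₐ[K] U3 K ⊗[K] U3 K :=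
  FreeAlgebra.lift K
    ![Y K 0 ⊗ₜ 1 + (Y K 1 * Y K 2) ⊗ₜ Y K 0,
      Y K 1 ⊗ₜ Y K 1,
      Y K 2 ⊗ₜ Y K 2]

/-- The counit: `ε(B) = 0`, `ε(F±) = 1`. -/
noncomputable def epsU3 : U3 K →ₐ[K] K :=
  FreeAlgebra.lift K ![0, 1, 1]

section SkewPrimitive

open Algebra.TensorProduct (lid rid assoc)

variable {R A : Type*} [CommSemiring R] [Semiring A] [Algebra R A]
  (Δ : A →ₐ[R] A ⊗[R] A) (ε : A →ₐ[R] R) {g b : A}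

theorem comul_mul_of_grouplike {g' : A} (hg : Δ g = g ⊗ₜ g) (hg' : Δ g' = g' ⊗ₜ g') :
    Δ (g * g') = (g * g') ⊗ₜ (g * g') := by
  rw [map_mul, hg, hg', Algebra.TensorProduct.tmul_mul_tmul]

theorem lid_map_counit_id_of_grouplike (hg : Δ g = g ⊗ₜ g) (hεg : ε g = 1) :
    lid R A (Algebra.TensorProduct.map ε (AlgHom.id R A) (Δ g)) = g := by
  rw [hg, Algebra.TensorProduct.map_tmul, Algebra.TensorProduct.lid_tmul, hεg, one_smul,
    AlgHom.id_apply]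

theorem rid_map_id_counit_of_grouplike (hg : Δ g = g ⊗ₜ g) (hεg : ε g = 1) :
    rid R R A (Algebra.TensorProduct.map (AlgHom.id R A) ε (Δ g)) = g := by
  rw [hg, Algebra.TensorProduct.map_tmul, Algebra.TensorProduct.rid_tmul, hεg, one_smul,
    AlgHom.id_apply]

theorem lid_map_counit_id_of_skewPrimitive (hb : Δ b = b ⊗ₜ 1 + g ⊗ₜ b)
    (hεg : ε g = 1) (hεb : ε b = 0) :
    lid R A (Algebra.TensorProduct.map ε (AlgHom.id R A) (Δ b)) = b := by
  simp only [hb, map_add, Algebra.TensorProduct.map_tmul, Algebra.TensorProduct.lid_tmul, hεg, hεb,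
    zero_smul, one_smul, AlgHom.id_apply, zero_add]

theorem rid_map_id_counit_of_skewPrimitive (hb : Δ b = b ⊗ₜ 1 + g ⊗ₜ b) (hεb : ε b = 0) :
    rid R R A (Algebra.TensorProduct.map (AlgHom.id R A) ε (Δ b)) = b := by
  simp only [hb, map_add, Algebra.TensorProduct.map_tmul, Algebra.TensorProduct.rid_tmul, hεb,
    map_one, zero_smul, one_smul, AlgHom.id_apply, add_zero]

theorem assoc_map_comul_id_of_skewPrimitive (hg : Δ g = g ⊗ₜ g)
    (hb : Δ b = b ⊗ₜ 1 + g ⊗ₜ b) :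
    assoc R R R A A A (Algebra.TensorProduct.map Δ (AlgHom.id R A) (Δ b)) =
      b ⊗ₜ (1 ⊗ₜ 1) + g ⊗ₜ (b ⊗ₜ 1) + g ⊗ₜ (g ⊗ₜ b) := by
  simp only [hb, hg, map_add, Algebra.TensorProduct.map_tmul, AlgHom.id_apply, add_tmul,
    Algebra.TensorProduct.assoc_tmul]

theorem map_id_comul_of_skewPrimitive (hb : Δ b = b ⊗ₜ 1 + g ⊗ₜ b) :
    Algebra.TensorProduct.map (AlgHom.id R A) Δ (Δ b) =
      b ⊗ₜ (1 ⊗ₜ 1) + g ⊗ₜ (b ⊗ₜ 1) + g ⊗ₜ (g ⊗ₜ b) := by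
  rw [hb, map_add, Algebra.TensorProduct.map_tmul, Algebra.TensorProduct.map_tmul, hb, map_one,
    ← Algebra.TensorProduct.one_def, tmul_add, AlgHom.id_apply, AlgHom.id_apply, add_assoc]

end SkewPrimitive

@[simp]
theorem deltaU3_Y_zero :
    deltaU3 K (Y K 0) = Y K 0 ⊗ₜ 1 + (Y K 1 * Y K 2) ⊗ₜ Y K 0 := by
  simp [deltaU3, Y]

@[simp]
theorem deltaU3_Y_one : deltaU3 K (Y K 1) = Y K 1 ⊗ₜ Y K 1 := by
  simp [deltaU3, Y]

@[simp]
theorem deltaU3_Y_two : deltaU3 K (Y K 2) = Y K 2 ⊗ₜ Y K 2 := by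
  simp [deltaU3, Y]

@[simp]
theorem epsU3_Y_zero : epsU3 K (Y K 0) = 0 := by
  simp [epsU3, Y]

@[simp]
theorem epsU3_Y_one : epsU3 K (Y K 1) = 1 := by
  simp [epsU3, Y]

@[simp]
theorem epsU3_Y_two : epsU3 K (Y K 2) = 1 := by
  simp [epsU3, Y]

theorem deltaU3_Y_one_mul_Y_two :
    deltaU3 K (Y K 1 * Y K 2) = (Y K 1 * Y K 2) ⊗ₜ (Y K 1 * Y K 2) :=
  comul_mul_of_grouplike _ (deltaU3_Y_one K) (deltaU3_Y_two K)

theorem epsU3_Y_one_mul_Y_two : epsU3 K (Y K 1 * Y K 2) = 1 := by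
  simp

theorem stmt17 :
    (∀ i : Fin 3,
      (Algebra.TensorProduct.lid K (U3 K))
          ((Algebra.TensorProduct.map (epsU3 K) (AlgHom.id K (U3 K)))
            (deltaU3 K (Y K i))) = Y K i ∧
      (Algebra.TensorProduct.rid K K (U3 K))
          ((Algebra.TensorProduct.map (AlgHom.id K (U3 K)) (epsU3 K))
            (deltaU3 K (Y K i))) = Y K i) ∧
    (Algebra.TensorProduct.assoc K K K (U3 K) (U3 K) (U3 K))
        ((Algebra.TensorProduct.map (deltaU3 K) (AlgHom.id K (U3 K)))
          (deltaU3 K (Y K 0)))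
      = Y K 0 ⊗ₜ ((1 : U3 K) ⊗ₜ (1 : U3 K))
        + (Y K 1 * Y K 2) ⊗ₜ (Y K 0 ⊗ₜ (1 : U3 K))
        + (Y K 1 * Y K 2) ⊗ₜ ((Y K 1 * Y K 2) ⊗ₜ Y K 0) ∧
    (Algebra.TensorProduct.map (AlgHom.id K (U3 K)) (deltaU3 K))
        (deltaU3 K (Y K 0))
      = Y K 0 ⊗ₜ ((1 : U3 K) ⊗ₜ (1 : U3 K))
        + (Y K 1 * Y K 2) ⊗ₜ (Y K 0 ⊗ₜ (1 : U3 K))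
        + (Y K 1 * Y K 2) ⊗ₜ ((Y K 1 * Y K 2) ⊗ₜ Y K 0) := by
  have hg := deltaU3_Y_one_mul_Y_two K
  have hb := deltaU3_Y_zero K
  refine ⟨fun i => ?_, assoc_map_comul_id_of_skewPrimitive _ hg hb,
    map_id_comul_of_skewPrimitive _ hb⟩
  fin_cases i
  · exact ⟨lid_map_counit_id_of_skewPrimitive _ _ hb (epsU3_Y_one_mul_Y_two K) (epsU3_Y_zero K),
      rid_map_id_counit_of_skewPrimitive _ _ hb (epsU3_Y_zero K)⟩
  · exact ⟨lid_map_counit_id_of_grouplike _ _ (deltaU3_Y_one K) (epsU3_Y_one K),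
      rid_map_id_counit_of_grouplike _ _ (deltaU3_Y_one K) (epsU3_Y_one K)⟩
  · exact ⟨lid_map_counit_id_of_grouplike _ _ (deltaU3_Y_two K) (epsU3_Y_two K),
      rid_map_id_counit_of_grouplike _ _ (deltaU3_Y_two K) (epsU3_Y_two K)⟩

end
end
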